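/- arXiv:2404.08116 — 2 statements merged into one kernel-verified Lean document; each statement's English description precedes it below -/
import Mathlib

section
/- Let σ_m be the normalized surface (area) measure on the unit sphere S^{m-1} ⊂ ℝ^m, m ≥ 2. Then for every ν ≥ 1 there is a constant M_ν, independent of m, such that for every unit vector u ∈ ℝ^m: ∫_{S^{m-1}} |log |⟨a,u⟩||^ν dσ_m(a) ≤ M_ν (log m)^ν. -/
/-
Since `|log t| ^ ν ≤ (ν / s) ^ ν * t ^ (-s)` on `[0, 1]`, it suffices to bound the negative
moments `∫ |⟪a, u⟫| ^ (-s) dσ(a)`. Integrating `|⟪x, u⟫| ^ q * exp (-π ‖x‖²)` over `ℝ^m` once in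
polar coordinates and once after rotating `u` to a coordinate vector gives the exact value
`Γ(m/2) Γ((q+1)/2) / (√π Γ((m+q)/2))` of the `q`-th moment; the case `q = 0` computes the mass of
the sphere. Log-convexity of `Γ` bounds the moment of order `-s` by `2 m^(s/2) / (1 - s)`, and
the choice `s = ν / (ν + log m)` turns `(ν / s) ^ ν * 2 m^(s/2) / (1 - s)` into `O((log m) ^ ν)`.
-/

open MeasureTheory Real Metric Set

lemma abs_log_rpow_le_rpow_neg {ν s t : ℝ} (hν : 0 < ν) (hs : 0 < s) (ht₀ : 0 ≤ t)
    (ht₁ : t ≤ 1) : |log t| ^ ν ≤ (ν / s) ^ ν * t ^ (-s) := by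
  rcases ht₀.eq_or_lt with rfl | ht₀
  · rw [log_zero, abs_zero, zero_rpow hν.ne']
    positivity
  have hlog : |log t| ≤ ν / s * t ^ (-(s / ν)) := by
    rw [abs_of_nonpos (log_nonpos ht₀.le ht₁), ← log_inv]
    calc log t⁻¹ ≤ t⁻¹ ^ (s / ν) / (s / ν) := log_le_rpow_div (by positivity) (by positivity)
      _ = _ := by rw [inv_rpow ht₀.le, ← rpow_neg ht₀.le]; field_simp
  calc |log t| ^ ν ≤ (ν / s * t ^ (-(s / ν))) ^ ν := rpow_le_rpow (abs_nonneg _) hlog hν.le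
    _ = _ := by
      rw [mul_rpow (by positivity) (by positivity), ← rpow_mul ht₀.le]
      field_simp

namespace Real

lemma Gamma_le_inv {y : ℝ} (hy₀ : 0 < y) (hy₁ : y ≤ 1) : Gamma y ≤ y⁻¹ := by
  have hGamma : Gamma (y + 1) ≤ 1 := by
    have := convexOn_Gamma.2 (mem_Ioi.2 one_pos) (mem_Ioi.2 two_pos)
      (sub_nonneg.2 hy₁) hy₀.le (sub_add_cancel 1 y)
    simp only [smul_eq_mul, Gamma_one, Gamma_two, mul_one] at this
    calc Gamma (y + 1) = Gamma (1 - y + y * 2) := by ring_nf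
      _ ≤ 1 := this.trans_eq (by ring)
  rw [Gamma_add_one hy₀.ne'] at hGamma
  rw [le_inv_comm₀ (Gamma_pos_of_pos hy₀) hy₀, ← one_div, le_div_iff₀ (Gamma_pos_of_pos hy₀)]
  linarith

lemma Gamma_add_le_mul_rpow {x t : ℝ} (hx : 0 < x) (ht₀ : 0 < t) (ht₁ : t < 1) :
    Gamma (x + t) ≤ Gamma x * x ^ t := by
  have hΓ := Gamma_pos_of_pos hx
  calc Gamma (x + t) = Gamma ((1 - t) * x + t * (x + 1)) := by ring_nf
    _ ≤ Gamma x ^ (1 - t) * Gamma (x + 1) ^ t :=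
      Gamma_mul_add_mul_le_rpow_Gamma_mul_rpow_Gamma hx (by linarith) (by linarith) ht₀ (by ring)
    _ = Gamma x * x ^ t := by
      rw [Gamma_add_one hx.ne', mul_rpow hx.le hΓ.le, mul_left_comm, ← rpow_add hΓ,
        sub_add_cancel, rpow_one, mul_comm]

lemma Gamma_mul_Gamma_div_le {n s : ℝ} (hn : 1 ≤ n) (hs₀ : 0 < s) (hs₁ : s < 1) :
    Gamma (n / 2) * Gamma ((1 - s) / 2) / (√π * Gamma ((n - s) / 2))
      ≤ 2 * n ^ (s / 2) / (1 - s) := by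
  have hns : 0 < (n - s) / 2 := by linarith
  have hΓn : Gamma (n / 2) ≤ Gamma ((n - s) / 2) * n ^ (s / 2) :=
    calc Gamma (n / 2) = Gamma ((n - s) / 2 + s / 2) := by ring_nf
      _ ≤ Gamma ((n - s) / 2) * ((n - s) / 2) ^ (s / 2) :=
        Gamma_add_le_mul_rpow hns (by linarith) (by linarith)
      _ ≤ Gamma ((n - s) / 2) * n ^ (s / 2) := by gcongr; linarith
  have hΓs : Gamma ((1 - s) / 2) ≤ 2 / (1 - s) := by
    simpa using Gamma_le_inv (y := (1 - s) / 2) (by linarith) (by linarith)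
  rw [div_le_iff₀ (by positivity)]
  calc Gamma (n / 2) * Gamma ((1 - s) / 2) ≤ Gamma ((n - s) / 2) * n ^ (s / 2) * (2 / (1 - s)) :=
        mul_le_mul hΓn hΓs (Gamma_pos_of_pos (by linarith)).le (by positivity)
    _ = 2 * n ^ (s / 2) / (1 - s) * (1 * Gamma ((n - s) / 2)) := by ring
    _ ≤ 2 * n ^ (s / 2) / (1 - s) * (√π * Gamma ((n - s) / 2)) := by
      gcongr
      exact one_le_sqrt.2 (by linarith [pi_gt_three])

end Real

lemma integrable_comp_abs_of_integrableOn_Ioi {f : ℝ → ℝ} (hf : IntegrableOn f (Ioi 0)) :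
    Integrable fun x => f |x| := by
  have hIoi : IntegrableOn (fun x => f |x|) (Ioi 0) :=
    hf.congr_fun (fun x hx => by rw [abs_of_pos (mem_Ioi.1 hx)]) measurableSet_Ioi
  have hIic : IntegrableOn (fun x => f |x|) (Iic 0) := by
    rw [← (Measure.measurePreserving_neg (volume : Measure ℝ)).integrableOn_comp_preimage
      (Homeomorph.neg ℝ).measurableEmbedding]
    simpa [Function.comp_def, integrableOn_Ici_iff_integrableOn_Ioi] using hIoi
  rw [← integrableOn_univ, ← Iic_union_Ioi (a := (0 : ℝ))]
  exact hIic.union hIoi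

lemma integrable_abs_rpow_mul_exp_neg_mul_sq {b q : ℝ} (hb : 0 < b) (hq : -1 < q) :
    Integrable fun t : ℝ => |t| ^ q * exp (-b * t ^ 2) := by
  simpa only [sq_abs] using
    integrable_comp_abs_of_integrableOn_Ioi (integrableOn_rpow_mul_exp_neg_mul_sq hb hq)

lemma integral_abs_rpow_mul_exp_neg_mul_sq {b q : ℝ} (hb : 0 < b) (hq : -1 < q) :
    ∫ t : ℝ, |t| ^ q * exp (-b * t ^ 2) = b ^ (-(q + 1) / 2) * Gamma ((q + 1) / 2) := by
  have h := integral_comp_abs (f := fun t => t ^ q * exp (-b * t ^ 2))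
  simp only [sq_abs] at h
  rw [h]
  simp_rw [← rpow_two]
  rw [integral_rpow_mul_exp_neg_mul_rpow two_pos hq hb]
  ring

lemma integral_Ioi_pow_mul_rpow_mul_gaussian (n : ℕ) {q : ℝ} (hq : -1 < n + q) :
    ∫ r in Ioi (0 : ℝ), r ^ n * (r ^ q * exp (-π * r ^ 2))
      = π ^ (-(n + q + 1) / 2) * (1 / 2) * Gamma ((n + q + 1) / 2) := by
  rw [← integral_rpow_mul_exp_neg_mul_rpow two_pos hq pi_pos]
  refine setIntegral_congr_fun measurableSet_Ioi fun r (hr : 0 < r) => ?_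
  rw [rpow_add hr, rpow_natCast, rpow_two, mul_assoc]

lemma integral_volumeIoiPow (n : ℕ) (g : ℝ → ℝ) :
    ∫ r, g r ∂Measure.volumeIoiPow n = ∫ r in Ioi (0 : ℝ), r ^ n * g r := by
  simp only [Measure.volumeIoiPow, ENNReal.ofReal]
  rw [integral_withDensity_eq_integral_smul (measurable_subtype_coe.pow_const _).real_toNNReal,
    integral_subtype_comap measurableSet_Ioi fun r => (r ^ n).toNNReal • g r]
  refine setIntegral_congr_fun measurableSet_Ioi fun r hr => ?_
  rw [NNReal.smul_def, Real.coe_toNNReal _ (pow_nonneg (le_of_lt hr) _), smul_eq_mul]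

section PolarCoordinates

variable {E : Type*} [NormedAddCommGroup E] [NormedSpace ℝ E] [FiniteDimensional ℝ E]
  [MeasurableSpace E] [BorelSpace E] [Nontrivial E] (μ : Measure E) [μ.IsAddHaarMeasure]
  {F : E → ℝ} {f : E → ℝ} {g : ℝ → ℝ}

lemma integrable_iff_integrable_toSphere_prod (hF : ∀ x ≠ 0, F x = f (‖x‖⁻¹ • x) * g ‖x‖) :
    Integrable F μ ↔ Integrable (fun p : sphere (0 : E) 1 × Ioi (0 : ℝ) => f p.1 * g p.2)
      (μ.toSphere.prod (.volumeIoiPow (Module.finrank ℝ E - 1))) := by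
  have hcompl : Integrable F μ ↔
      Integrable (F ∘ Subtype.val) (μ.comap ((↑) : ({0}ᶜ : Set E) → E)) := by
    rw [← integrableOn_iff_comap_subtypeVal (measurableSet_singleton _).compl, IntegrableOn,
      restrict_compl_singleton]
  rw [hcompl, ← μ.measurePreserving_homeomorphUnitSphereProd.integrable_comp_emb
    (Homeomorph.measurableEmbedding _)]
  refine integrable_congr (ae_of_all _ fun x => ?_)
  simp [hF x x.2]

lemma integral_eq_integral_toSphere_mul (hF : ∀ x ≠ 0, F x = f (‖x‖⁻¹ • x) * g ‖x‖) :
    ∫ x, F x ∂μ = (∫ a : sphere (0 : E) 1, f a ∂μ.toSphere)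
      * ∫ r in Ioi (0 : ℝ), r ^ (Module.finrank ℝ E - 1) * g r := by
  have hcompl : ∫ x, F x ∂μ = ∫ x : ({0}ᶜ : Set E), F x ∂(μ.comap (↑)) := by
    rw [integral_subtype_comap (measurableSet_singleton _).compl, restrict_compl_singleton]
  rw [hcompl, ← integral_volumeIoiPow, ← integral_prod_mul (fun a : sphere (0 : E) 1 => f a),
    ← μ.measurePreserving_homeomorphUnitSphereProd.integral_comp
      (Homeomorph.measurableEmbedding _)]
  refine integral_congr_ae (ae_of_all _ fun x => ?_)
  simp [hF x x.2]

lemma MeasureTheory.Integrable.toSphere_of_eq_mul (hF : ∀ x ≠ 0, F x = f (‖x‖⁻¹ • x) * g ‖x‖)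
    (hint : Integrable F μ) (hg : ∫ r in Ioi (0 : ℝ), r ^ (Module.finrank ℝ E - 1) * g r ≠ 0) :
    Integrable (fun a : sphere (0 : E) 1 => f a) μ.toSphere := by
  have := ((integrable_iff_integrable_toSphere_prod μ hF).1 hint).integral_prod_left
  simp_rw [integral_const_mul, integral_volumeIoiPow] at this
  exact (integrable_mul_const_iff (isUnit_iff_ne_zero.2 hg) _).1 this

end PolarCoordinates

section Gaussian

variable {ι : Type*} [Fintype ι]

lemma nonempty_of_norm_eq_one {u : EuclideanSpace ℝ ι} (hu : ‖u‖ = 1) : Nonempty ι := by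
  by_contra h
  simp only [not_nonempty_iff] at h
  simp [Subsingleton.elim u 0] at hu

lemma comp_apply_mul_gaussian_eq_prod [DecidableEq ι] (i : ι) (g : ℝ → ℝ) (x : ι → ℝ) :
    g (x i) * exp (-π * ∑ j, x j ^ 2)
      = ∏ j, (if j = i then g (x j) else 1) * exp (-π * x j ^ 2) := by
  rw [Finset.prod_mul_distrib, Finset.prod_ite_eq' Finset.univ i, Finset.mul_sum, exp_sum]
  simp

lemma integrable_comp_apply_mul_gaussian (i : ι) {g : ℝ → ℝ}
    (hg : Integrable fun t => g t * exp (-π * t ^ 2)) :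
    Integrable fun x : EuclideanSpace ℝ ι => g (x i) * exp (-π * ‖x‖ ^ 2) := by
  classical
  rw [← (PiLp.volume_preserving_toLp ι).integrable_comp_emb
    (MeasurableEquiv.toLp 2 _).measurableEmbedding]
  simp only [Function.comp_def, EuclideanSpace.norm_sq_eq, Real.norm_eq_abs, sq_abs]
  simp_rw [comp_apply_mul_gaussian_eq_prod i g]
  refine Integrable.fintype_prod (f := fun j t => (if j = i then g t else 1) * exp (-π * t ^ 2))
    fun j => ?_
  split_ifs
  · exact hg
  · simpa using integrable_exp_neg_mul_sq pi_pos

lemma integral_comp_apply_mul_gaussian (i : ι) (g : ℝ → ℝ) :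
    ∫ x : EuclideanSpace ℝ ι, g (x i) * exp (-π * ‖x‖ ^ 2) = ∫ t, g t * exp (-π * t ^ 2) := by
  classical
  rw [← (PiLp.volume_preserving_toLp ι).integral_comp
    (MeasurableEquiv.toLp 2 _).measurableEmbedding]
  simp only [EuclideanSpace.norm_sq_eq, Real.norm_eq_abs, sq_abs]
  simp_rw [comp_apply_mul_gaussian_eq_prod i g]
  rw [integral_fintype_prod_volume_eq_prod
    (fun j t => (if j = i then g t else 1) * exp (-π * t ^ 2)), Finset.prod_eq_single i]
  · simp
  · intro j _ hj
    simp only [if_neg hj, one_mul]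
    rw [integral_gaussian, div_self pi_ne_zero, sqrt_one]
  · simp

lemma exists_linearIsometryEquiv_inner_eq_apply {u : EuclideanSpace ℝ ι} (hu : ‖u‖ = 1) :
    ∃ (R : EuclideanSpace ℝ ι ≃ₗᵢ[ℝ] EuclideanSpace ℝ ι) (i : ι), ∀ x, inner ℝ x u = R x i := by
  classical
  obtain ⟨i⟩ := nonempty_of_norm_eq_one hu
  set e := EuclideanSpace.single i (1 : ℝ)
  set R := Submodule.reflection (ℝ ∙ (u - e))ᗮ
  have hRu : R u = e := Submodule.reflection_sub (by simp [e, hu])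
  refine ⟨R, i, fun x => ?_⟩
  rw [← R.inner_map_map, hRu]
  simp [e, EuclideanSpace.inner_single_right]

lemma integrable_comp_inner_mul_gaussian {u : EuclideanSpace ℝ ι} (hu : ‖u‖ = 1) {g : ℝ → ℝ}
    (hg : Integrable fun t => g t * exp (-π * t ^ 2)) :
    Integrable fun x : EuclideanSpace ℝ ι => g (inner ℝ x u) * exp (-π * ‖x‖ ^ 2) := by
  obtain ⟨R, i, hR⟩ := exists_linearIsometryEquiv_inner_eq_apply hu
  have := integrable_comp_apply_mul_gaussian i hg
  rw [← R.measurePreserving.integrable_comp_emb R.toHomeomorph.measurableEmbedding] at this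
  simpa [Function.comp_def, hR] using this

lemma integral_comp_inner_mul_gaussian {u : EuclideanSpace ℝ ι} (hu : ‖u‖ = 1) (g : ℝ → ℝ) :
    ∫ x : EuclideanSpace ℝ ι, g (inner ℝ x u) * exp (-π * ‖x‖ ^ 2)
      = ∫ t, g t * exp (-π * t ^ 2) := by
  obtain ⟨R, i, hR⟩ := exists_linearIsometryEquiv_inner_eq_apply hu
  calc ∫ x : EuclideanSpace ℝ ι, g (inner ℝ x u) * exp (-π * ‖x‖ ^ 2)
      = ∫ x, (fun y : EuclideanSpace ℝ ι => g (y i) * exp (-π * ‖y‖ ^ 2)) (R x) := by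
        simp [hR]
    _ = ∫ t, g t * exp (-π * t ^ 2) :=
      (R.measurePreserving.integral_comp R.toHomeomorph.measurableEmbedding _).trans
        (integral_comp_apply_mul_gaussian i g)

end Gaussian

section SphereMoments

variable {ι : Type*} [Fintype ι] {u : EuclideanSpace ℝ ι} {q : ℝ}

local notation "ω" => Measure.toSphere (volume : Measure (EuclideanSpace ℝ ι))
local notation "σ" => (ω univ)⁻¹ • ω

lemma abs_inner_rpow_mul_gaussian_eq {x : EuclideanSpace ℝ ι} (hx : x ≠ 0) :
    |inner ℝ x u| ^ q * exp (-π * ‖x‖ ^ 2)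
      = |inner ℝ (‖x‖⁻¹ • x) u| ^ q * (‖x‖ ^ q * exp (-π * ‖x‖ ^ 2)) := by
  have hx' : 0 < ‖x‖ := norm_pos_iff.2 hx
  rw [real_inner_smul_left, abs_mul, abs_inv, abs_norm, mul_rpow (by positivity) (abs_nonneg _),
    inv_rpow hx'.le]
  field_simp

lemma integral_Ioi_pow_finrank_sub_one_mul_rpow_mul_gaussian [Nonempty ι] (hq : -1 < q) :
    ∫ r in Ioi (0 : ℝ),
        r ^ (Module.finrank ℝ (EuclideanSpace ℝ ι) - 1) * (r ^ q * exp (-π * r ^ 2))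
      = π ^ (-(Fintype.card ι + q) / 2) * (1 / 2) * Gamma ((Fintype.card ι + q) / 2) := by
  have hcard : ((Module.finrank ℝ (EuclideanSpace ℝ ι) - 1 : ℕ) : ℝ) + 1 = Fintype.card ι := by
    rw [finrank_euclideanSpace, Nat.cast_pred Fintype.card_pos, sub_add_cancel]
  rw [integral_Ioi_pow_mul_rpow_mul_gaussian _ (by linarith), add_right_comm, hcard]

lemma integrable_abs_inner_rpow_toSphere (hu : ‖u‖ = 1) (hq : -1 < q) :
    Integrable (fun a : sphere (0 : EuclideanSpace ℝ ι) 1 => |inner ℝ a.1 u| ^ q) ω := by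
  have := nonempty_of_norm_eq_one hu
  refine (integrable_comp_inner_mul_gaussian hu
    (integrable_abs_rpow_mul_exp_neg_mul_sq pi_pos hq)).toSphere_of_eq_mul _
    (f := fun a => |inner ℝ a u| ^ q) (g := fun r => r ^ q * exp (-π * r ^ 2))
    (fun x hx => abs_inner_rpow_mul_gaussian_eq hx) ?_
  have hcard : (1 : ℝ) ≤ Fintype.card ι := Nat.one_le_cast.2 Fintype.card_pos
  have : 0 < Gamma ((Fintype.card ι + q) / 2) := Gamma_pos_of_pos (by linarith)
  rw [integral_Ioi_pow_finrank_sub_one_mul_rpow_mul_gaussian hq]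
  positivity

lemma integral_abs_inner_rpow_toSphere_mul (hu : ‖u‖ = 1) (hq : -1 < q) :
    (∫ a : sphere (0 : EuclideanSpace ℝ ι) 1, |inner ℝ a.1 u| ^ q ∂ω)
        * (π ^ (-(Fintype.card ι + q) / 2) * (1 / 2) * Gamma ((Fintype.card ι + q) / 2))
      = π ^ (-(q + 1) / 2) * Gamma ((q + 1) / 2) := by
  have := nonempty_of_norm_eq_one hu
  rw [← integral_Ioi_pow_finrank_sub_one_mul_rpow_mul_gaussian hq,
    ← integral_eq_integral_toSphere_mul _ (f := fun a => |inner ℝ a u| ^ q)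
      (g := fun r => r ^ q * exp (-π * r ^ 2)) (fun x hx => abs_inner_rpow_mul_gaussian_eq hx),
    integral_comp_inner_mul_gaussian hu (fun t => |t| ^ q),
    integral_abs_rpow_mul_exp_neg_mul_sq pi_pos hq]

lemma integral_abs_inner_rpow_normalized_toSphere (hu : ‖u‖ = 1) (hq : -1 < q) :
    ∫ a : sphere (0 : EuclideanSpace ℝ ι) 1, |inner ℝ a.1 u| ^ q ∂σ
      = Gamma (Fintype.card ι / 2) * Gamma ((q + 1) / 2)
        / (√π * Gamma ((Fintype.card ι + q) / 2)) := by
  have := nonempty_of_norm_eq_one hu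
  have hmass := integral_abs_inner_rpow_toSphere_mul hu (q := 0) (by norm_num)
  simp only [rpow_zero, integral_const, smul_eq_mul, mul_one, add_zero, zero_add] at hmass
  rw [show -(1 : ℝ) / 2 = -(1 / 2) by ring, rpow_neg pi_pos.le, ← sqrt_eq_rpow, Gamma_one_half_eq,
    inv_mul_cancel₀ (by positivity)] at hmass
  have hmoment := integral_abs_inner_rpow_toSphere_mul hu hq
  rw [integral_smul_measure, ENNReal.toReal_inv, ← measureReal_def, smul_eq_mul,
    eq_inv_of_mul_eq_one_left hmass, inv_inv]
  set n : ℝ := (Fintype.card ι : ℝ)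
  set I := ∫ a : sphere (0 : EuclideanSpace ℝ ι) 1, |inner ℝ a.1 u| ^ q ∂ω
  have hn : 1 ≤ n := Nat.one_le_cast.2 Fintype.card_pos
  have hΓnq : 0 < Gamma ((n + q) / 2) := Gamma_pos_of_pos (by linarith)
  have hπ : π ^ (-n / 2) * √π = π ^ (-(n + q) / 2) * π ^ ((q + 1) / 2) := by
    rw [sqrt_eq_rpow, ← rpow_add pi_pos, ← rpow_add pi_pos]
    ring_nf
  have hπ' : π ^ ((q + 1) / 2) * π ^ (-(q + 1) / 2) = 1 := by
    rw [← rpow_add pi_pos, neg_div, add_neg_cancel, rpow_zero]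
  rw [eq_div_iff (by positivity)]
  linear_combination (1 / 2 * Gamma (n / 2) * I * Gamma ((n + q) / 2)) * hπ
    + (Gamma (n / 2) * π ^ ((q + 1) / 2)) * hmoment + (Gamma (n / 2) * Gamma ((q + 1) / 2)) * hπ'

lemma integrable_abs_inner_rpow_normalized_toSphere (hu : ‖u‖ = 1) (hq : -1 < q) :
    Integrable (fun a : sphere (0 : EuclideanSpace ℝ ι) 1 => |inner ℝ a.1 u| ^ q) σ := by
  have := nonempty_of_norm_eq_one hu
  exact (integrable_abs_inner_rpow_toSphere hu hq).smul_measure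
    (ENNReal.inv_ne_top.2 (Measure.measure_univ_ne_zero.2 (Measure.toSphere_ne_zero _)))

lemma integral_abs_inner_rpow_neg_normalized_toSphere_le (hu : ‖u‖ = 1) {s : ℝ} (hs₀ : 0 < s)
    (hs₁ : s < 1) :
    ∫ a : sphere (0 : EuclideanSpace ℝ ι) 1, |inner ℝ a.1 u| ^ (-s) ∂σ
      ≤ 2 * (Fintype.card ι : ℝ) ^ (s / 2) / (1 - s) := by
  have := nonempty_of_norm_eq_one hu
  rw [integral_abs_inner_rpow_normalized_toSphere hu (by linarith), neg_add_eq_sub,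
    ← sub_eq_add_neg]
  exact Gamma_mul_Gamma_div_le (Nat.one_le_cast.2 Fintype.card_pos) hs₀ hs₁

end SphereMoments

lemma div_rpow_mul_rpow_div_one_sub_le {ν m s : ℝ} (hν : 0 < ν) (hm : 2 ≤ m)
    (hs : s = ν / (ν + log m)) :
    (ν / s) ^ ν * (2 * m ^ (s / 2) / (1 - s))
      ≤ 2 * (1 + ν / log 2) ^ (ν + 1) * exp (ν / 2) * log m ^ ν := by
  have hlog2 : 0 < log 2 := log_pos one_lt_two
  have hL : log 2 ≤ log m := log_le_log two_pos hm
  set L := log m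
  set C := 1 + ν / log 2
  have hL₀ : 0 < L := hlog2.trans_le hL
  have hνL₀ : 0 < ν + L := by linarith
  have hνs : ν / s = ν + L := by rw [hs]; field_simp
  have h1s : 1 - s = L / (ν + L) := by rw [hs]; field_simp; ring
  have hνL : ν + L ≤ C * L := by
    have : ν ≤ ν / log 2 * L := by rw [div_mul_eq_mul_div, le_div_iff₀ hlog2]; nlinarith
    linarith
  have hms : m ^ (s / 2) ≤ exp (ν / 2) := by
    rw [rpow_def_of_pos (by linarith), exp_le_exp, hs]
    rw [show L * (ν / (ν + L) / 2) = ν / 2 * (L / (ν + L)) by ring]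
    exact mul_le_of_le_one_right (by positivity) ((div_le_one (by linarith)).2 (by linarith))
  rw [hνs, h1s]
  calc (ν + L) ^ ν * (2 * m ^ (s / 2) / (L / (ν + L)))
      = 2 * (ν + L) ^ ν * ((ν + L) / L) * m ^ (s / 2) := by field_simp
    _ ≤ 2 * (C * L) ^ ν * C * exp (ν / 2) := by
      gcongr
      rwa [div_le_iff₀ hL₀]
    _ = 2 * C ^ (ν + 1) * exp (ν / 2) * L ^ ν := by
      have hC : 0 < C := by positivity
      rw [mul_rpow hC.le hL₀.le, rpow_add_one hC.ne']
      ring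

/-- Log-moment bound on spheres: for every `ν ≥ 1` there is `M_ν`, independent of `m`,
such that for every `m ≥ 2` and every unit vector `u ∈ ℝ^m`, the integral of
`|log |⟨a,u⟩||^ν` over the unit sphere `S^{m-1}` with respect to the normalized
surface measure is at most `M_ν (log m)^ν`. -/
theorem stmt4 (ν : ℝ) (hν : 1 ≤ ν) :
    ∃ M : ℝ, ∀ (m : ℕ), 2 ≤ m →
      ∀ u : EuclideanSpace ℝ (Fin m), ‖u‖ = 1 →
        ∫ a : sphere (0 : EuclideanSpace ℝ (Fin m)) 1,
            abs (Real.log (abs (inner ℝ ((a : EuclideanSpace ℝ (Fin m))) u : ℝ))) ^ ν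
            ∂((Measure.toSphere (volume : Measure (EuclideanSpace ℝ (Fin m))) Set.univ)⁻¹ •
                Measure.toSphere (volume : Measure (EuclideanSpace ℝ (Fin m))))
          ≤ M * (Real.log m) ^ ν := by
  have hν₀ : 0 < ν := by linarith
  refine ⟨2 * (1 + ν / log 2) ^ (ν + 1) * exp (ν / 2), fun m hm u hu => ?_⟩
  have hm' : (2 : ℝ) ≤ m := by exact_mod_cast hm
  have hlog : 0 < log m := log_pos (by linarith)
  set s := ν / (ν + log m) with hs
  have hs₀ : 0 < s := by positivity
  have hs₁ : s < 1 := (div_lt_one (by positivity)).2 (by linarith)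
  have hinner : ∀ a : sphere (0 : EuclideanSpace ℝ (Fin m)) 1,
      |inner ℝ (a : EuclideanSpace ℝ (Fin m)) u| ≤ 1 := fun a => by
    simpa [hu, norm_eq_of_mem_sphere a] using abs_real_inner_le_norm a.1 u
  calc _ ≤ ∫ a : sphere (0 : EuclideanSpace ℝ (Fin m)) 1,
          (ν / s) ^ ν * |inner ℝ (a : EuclideanSpace ℝ (Fin m)) u| ^ (-s)
          ∂((Measure.toSphere (volume : Measure (EuclideanSpace ℝ (Fin m))) Set.univ)⁻¹ •
                Measure.toSphere (volume : Measure (EuclideanSpace ℝ (Fin m)))) :=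
        integral_mono_of_nonneg (ae_of_all _ fun a => by positivity)
          ((integrable_abs_inner_rpow_normalized_toSphere hu (by linarith)).const_mul _)
          (ae_of_all _ fun a => abs_log_rpow_le_rpow_neg hν₀ hs₀ (abs_nonneg _) (hinner a))
    _ ≤ (ν / s) ^ ν * (2 * (m : ℝ) ^ (s / 2) / (1 - s)) := by
      rw [integral_const_mul]
      gcongr
      simpa using integral_abs_inner_rpow_neg_normalized_toSphere_le hu hs₀ hs₁
    _ ≤ _ := div_rpow_mul_rpow_div_one_sub_le hν₀ hm' hs
end

section
/- Let g: [-1,1] → [0,∞), g(t) = c_m (1−t²)^{(m-3)/2} with m ≥ 3 and c_m chosen so ∫_{-1}^1 g = 1. Then for every ν ≥ 1 there is M_ν independent of m such that ∫_{-1}^1 |log|t||^ν g(t) dt ≤ M_ν (log m)^ν. -/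
/-!
Smoothing the split at `|t| = 1/m`: from `log y ≤ y ^ ε / ε` with `ε = 1/(2ν)`, for `0 < |t| ≤ 1`
`|log |t||^ν ≤ 2^(ν-1) ((log m)^ν + (2ν)^ν (m |t|)^(-1/2))`.
Against `g = c_m (1 - t²)^((m-3)/2)` the first term contributes at most `2 (log m)^ν`, because
`c_m ≤ √((m-1)/(2π))` by log-convexity of `Γ` and `∫ (1 - t²)^a ≤ √(π/a)` by comparison with a
Gaussian. The second contributes at most a constant, because `g ≤ c_m ≤ √m / 2` and
`∫ |t|^(-1/2) = 4`. Finally `log m ≥ 1` for `m ≥ 3`.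
-/

open MeasureTheory Real Set

theorem Real.Gamma_add_half_le_sqrt_mul_Gamma {x : ℝ} (hx : 0 < x) :
    Gamma (x + 1 / 2) ≤ √x * Gamma x := by
  have hΓ := (Gamma_pos_of_pos hx).le
  have key := Gamma_mul_add_mul_le_rpow_Gamma_mul_rpow_Gamma hx (by linarith : 0 < x + 1)
    one_half_pos one_half_pos (add_halves 1)
  rwa [show 1 / 2 * x + 1 / 2 * (x + 1) = x + 1 / 2 by ring, Gamma_add_one hx.ne',
    ← sqrt_eq_rpow, ← sqrt_eq_rpow, ← sqrt_mul hΓ, mul_left_comm,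
    sqrt_mul' _ (mul_self_nonneg _), sqrt_mul_self hΓ] at key

theorem Real.rpow_add_le_mul_rpow_add_rpow {a b p : ℝ} (ha : 0 ≤ a) (hb : 0 ≤ b) (hp : 1 ≤ p) :
    (a + b) ^ p ≤ 2 ^ (p - 1) * (a ^ p + b ^ p) := by
  lift a to NNReal using ha
  lift b to NNReal using hb
  exact_mod_cast NNReal.rpow_add_le_mul_rpow_add_rpow a b hp

theorem abs_log_le_log_add_rpow_neg_div {L x ε : ℝ} (hL : 0 < L) (hx : 0 < x) (hx1 : x ≤ 1)
    (hε : 0 < ε) : |log x| ≤ log L + (L * x) ^ (-ε) / ε := by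
  have hLx : 0 < L * x := mul_pos hL hx
  have h := log_le_rpow_div (inv_pos.2 hLx).le hε
  rw [inv_rpow hLx.le, ← rpow_neg hLx.le, log_inv, log_mul hL.ne' hx.ne'] at h
  rw [abs_of_nonpos (log_nonpos hx.le hx1)]
  linarith

theorem abs_log_rpow_le {ν p L x : ℝ} (hν : 1 ≤ ν) (hp : 0 < p) (hL : 1 ≤ L) (hx : 0 < x)
    (hx1 : x ≤ 1) :
    |log x| ^ ν ≤ 2 ^ (ν - 1) * (log L ^ ν + (ν / p) ^ ν * (L * x) ^ (-p)) := by
  have hν0 : 0 < ν := by linarith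
  have hLx : 0 < L * x := by positivity
  have hA := log_nonneg hL
  have hB : 0 ≤ ν / p * (L * x) ^ (-(p / ν)) := by positivity
  have h := abs_log_le_log_add_rpow_neg_div (zero_lt_one.trans_le hL) hx hx1 (div_pos hp hν0)
  rw [div_eq_mul_inv _ (p / ν), inv_div, mul_comm] at h
  calc |log x| ^ ν ≤ (log L + ν / p * (L * x) ^ (-(p / ν))) ^ ν :=
        rpow_le_rpow (abs_nonneg _) h hν0.le
    _ ≤ _ := Real.rpow_add_le_mul_rpow_add_rpow hA hB hν
    _ = _ := by
      rw [mul_rpow (by positivity) (by positivity), ← rpow_mul hLx.le,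
        neg_mul, div_mul_cancel₀ _ hν0.ne']

theorem intervalIntegrable_abs_rpow_zero_one {r : ℝ} (hr : -1 < r) :
    IntervalIntegrable (fun t : ℝ => |t| ^ r) volume 0 1 :=
  (intervalIntegral.intervalIntegrable_rpow' hr).congr fun t ht => by
    rw [uIoc_of_le zero_le_one] at ht
    simp only [abs_of_pos ht.1]

theorem intervalIntegrable_abs_rpow_neg_one_zero {r : ℝ} (hr : -1 < r) :
    IntervalIntegrable (fun t : ℝ => |t| ^ r) volume (-1) 0 := by
  simpa using
    ((IntervalIntegrable.iff_comp_neg).mp (intervalIntegrable_abs_rpow_zero_one hr)).symm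

theorem integral_abs_rpow_neg_one_zero (r : ℝ) :
    ∫ t in (-1 : ℝ)..0, |t| ^ r = ∫ t in (0 : ℝ)..1, |t| ^ r := by
  simpa using (intervalIntegral.integral_comp_neg (a := 0) (b := 1) fun t : ℝ => |t| ^ r).symm

theorem integrableOn_abs_rpow_Icc {r : ℝ} (hr : -1 < r) :
    IntegrableOn (fun t : ℝ => |t| ^ r) (Icc (-1) 1) := by
  rw [integrableOn_Icc_iff_integrableOn_Ioc]
  exact ((intervalIntegrable_abs_rpow_neg_one_zero hr).trans
    (intervalIntegrable_abs_rpow_zero_one hr)).1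

theorem integral_abs_rpow_Icc {r : ℝ} (hr : -1 < r) :
    ∫ t in Icc (-1 : ℝ) 1, |t| ^ r = 2 / (r + 1) := by
  have h01 : ∫ t in (0 : ℝ)..1, |t| ^ r = 1 / (r + 1) := by
    rw [intervalIntegral.integral_congr (g := fun t : ℝ => t ^ r) fun t ht => ?_,
      integral_rpow (Or.inl hr), one_rpow, zero_rpow (by linarith), sub_zero]
    rw [uIcc_of_le zero_le_one] at ht
    simp only [abs_of_nonneg ht.1]
  rw [integral_Icc_eq_integral_Ioc, ← intervalIntegral.integral_of_le (by norm_num),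
    ← intervalIntegral.integral_add_adjacent_intervals
      (intervalIntegrable_abs_rpow_neg_one_zero hr) (intervalIntegrable_abs_rpow_zero_one hr),
    integral_abs_rpow_neg_one_zero, h01]
  ring

theorem integrableOn_one_sub_sq_rpow {a : ℝ} (ha : 0 ≤ a) :
    IntegrableOn (fun t : ℝ => (1 - t ^ 2) ^ a) (Icc (-1) 1) :=
  ((continuous_rpow_const ha).comp (continuous_const.sub (continuous_pow 2))).integrableOn_Icc

theorem one_sub_sq_nonneg_of_mem_Icc {t : ℝ} (ht : t ∈ Icc (-1 : ℝ) 1) : 0 ≤ 1 - t ^ 2 := by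
  nlinarith [ht.1, ht.2]

theorem one_sub_sq_rpow_le_one {a t : ℝ} (ha : 0 ≤ a) (ht : t ∈ Icc (-1 : ℝ) 1) :
    (1 - t ^ 2) ^ a ≤ 1 :=
  rpow_le_one (one_sub_sq_nonneg_of_mem_Icc ht) (by nlinarith [sq_nonneg t]) ha

theorem one_sub_sq_rpow_le_exp {a t : ℝ} (ha : 0 ≤ a) (ht : t ∈ Icc (-1 : ℝ) 1) :
    (1 - t ^ 2) ^ a ≤ exp (-a * t ^ 2) := by
  calc (1 - t ^ 2) ^ a ≤ exp (-t ^ 2) ^ a :=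
        rpow_le_rpow (one_sub_sq_nonneg_of_mem_Icc ht) (by linarith [add_one_le_exp (-t ^ 2)]) ha
    _ = exp (-a * t ^ 2) := by rw [← exp_mul]; ring_nf

theorem setIntegral_one_sub_sq_rpow_le {a : ℝ} (ha : 0 < a) :
    ∫ t in Icc (-1 : ℝ) 1, (1 - t ^ 2) ^ a ≤ √(π / a) := by
  have hint : Integrable fun t : ℝ => exp (-a * t ^ 2) := integrable_exp_neg_mul_sq ha
  calc ∫ t in Icc (-1 : ℝ) 1, (1 - t ^ 2) ^ a
      ≤ ∫ t in Icc (-1 : ℝ) 1, exp (-a * t ^ 2) :=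
        setIntegral_mono_on (integrableOn_one_sub_sq_rpow ha.le) hint.integrableOn
          measurableSet_Icc fun t ht => one_sub_sq_rpow_le_exp ha.le ht
    _ ≤ ∫ t, exp (-a * t ^ 2) := setIntegral_le_integral hint (.of_forall fun t => (exp_pos _).le)
    _ = √(π / a) := integral_gaussian a

theorem abs_log_abs_rpow_mul_le {ν L C w t : ℝ} (hν : 1 ≤ ν) (hL : 1 ≤ L)
    (ht : t ∈ Icc (-1 : ℝ) 1) (hw0 : 0 ≤ w) (hwC : w ≤ C) :
    |log (|t|)| ^ ν * w ≤ 2 ^ (ν - 1) *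
      (log L ^ ν * w + (2 * ν) ^ ν * L ^ (-(1 / 2 : ℝ)) * C * |t| ^ (-(1 / 2 : ℝ))) := by
  rcases eq_or_ne t 0 with rfl | ht0
  · simp only [abs_zero, log_zero, zero_rpow (by linarith : ν ≠ 0),
      zero_rpow (by norm_num : -(1 / 2 : ℝ) ≠ 0), zero_mul, mul_zero, add_zero]
    exact mul_nonneg (by positivity) (mul_nonneg (rpow_nonneg (log_nonneg hL) ν) hw0)
  have hlog := abs_log_rpow_le hν one_half_pos hL (abs_pos.2 ht0) (abs_le.2 ht)
  rw [div_div_eq_mul_div, div_one, mul_comm ν, mul_rpow (by linarith) (abs_nonneg t)] at hlog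
  calc |log (|t|)| ^ ν * w
      ≤ 2 ^ (ν - 1) *
          (log L ^ ν + (2 * ν) ^ ν * (L ^ (-(1 / 2 : ℝ)) * |t| ^ (-(1 / 2 : ℝ)))) * w :=
        mul_le_mul_of_nonneg_right hlog hw0
    _ = 2 ^ (ν - 1) *
          (log L ^ ν * w + (2 * ν) ^ ν * L ^ (-(1 / 2 : ℝ)) * w * |t| ^ (-(1 / 2 : ℝ))) := by
        ring
    _ ≤ _ := by gcongr

theorem setIntegral_abs_log_rpow_mul_le {ν L C : ℝ} {w : ℝ → ℝ} (hν : 1 ≤ ν) (hL : 1 ≤ L)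
    (hw : IntegrableOn w (Icc (-1) 1)) (hw0 : ∀ t ∈ Icc (-1 : ℝ) 1, 0 ≤ w t)
    (hwC : ∀ t ∈ Icc (-1 : ℝ) 1, w t ≤ C) :
    ∫ t in Icc (-1 : ℝ) 1, |log (|t|)| ^ ν * w t
      ≤ 2 ^ (ν - 1) * (log L ^ ν * (∫ t in Icc (-1 : ℝ) 1, w t)
        + 4 * (2 * ν) ^ ν * L ^ (-(1 / 2 : ℝ)) * C) := by
  have hr : (-1 : ℝ) < -(1 / 2) := by norm_num
  have hsing := (integrableOn_abs_rpow_Icc hr).const_mul ((2 * ν) ^ ν * L ^ (-(1 / 2 : ℝ)) * C)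
  calc ∫ t in Icc (-1 : ℝ) 1, |log (|t|)| ^ ν * w t
      ≤ ∫ t in Icc (-1 : ℝ) 1, 2 ^ (ν - 1) * (log L ^ ν * w t
          + (2 * ν) ^ ν * L ^ (-(1 / 2 : ℝ)) * C * |t| ^ (-(1 / 2 : ℝ))) := by
        refine integral_mono_of_nonneg ?_ (((hw.const_mul _).add hsing).const_mul _) ?_ <;>
          filter_upwards [ae_restrict_mem measurableSet_Icc] with t ht
        · exact mul_nonneg (by positivity) (hw0 t ht)
        · exact abs_log_abs_rpow_mul_le hν hL ht (hw0 t ht) (hwC t ht)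
    _ = 2 ^ (ν - 1) * (log L ^ ν * (∫ t in Icc (-1 : ℝ) 1, w t)
          + (2 * ν) ^ ν * L ^ (-(1 / 2 : ℝ)) * C * (2 / (-(1 / 2) + 1))) := by
        rw [integral_const_mul, integral_add (hw.const_mul _) hsing, integral_const_mul,
          integral_const_mul, integral_abs_rpow_Icc hr]
    _ = _ := by ring

/-- The constant `c_m` normalising the density `c_m (1 - t²)^((m-3)/2)` of one coordinate of a
uniform point on `S^{m-1}`. -/
noncomputable def sphereMarginalConst (m : ℝ) : ℝ := Gamma (m / 2) / (√π * Gamma ((m - 1) / 2))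

theorem sphereMarginalConst_pos {m : ℝ} (hm : 1 < m) : 0 < sphereMarginalConst m :=
  div_pos (Gamma_pos_of_pos (by linarith))
    (mul_pos (sqrt_pos.2 pi_pos) (Gamma_pos_of_pos (by linarith)))

theorem sphereMarginalConst_le_sqrt {m : ℝ} (hm : 1 < m) :
    sphereMarginalConst m ≤ √((m - 1) / (2 * π)) := by
  have h := Gamma_add_half_le_sqrt_mul_Gamma (x := (m - 1) / 2) (by linarith)
  rw [show (m - 1) / 2 + 1 / 2 = m / 2 by ring] at h
  rw [sphereMarginalConst,
    div_le_iff₀ (mul_pos (sqrt_pos.2 pi_pos) (Gamma_pos_of_pos (by linarith))), ← mul_assoc,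
    ← sqrt_mul (by positivity), div_mul_eq_mul_div, mul_div_mul_right _ _ pi_ne_zero]
  exact h

theorem sphereMarginalConst_mul_rpow_neg_half_le {m : ℝ} (hm : 1 < m) :
    sphereMarginalConst m * m ^ (-(1 / 2 : ℝ)) ≤ 1 / 2 := by
  have hsqrt : √((m - 1) / (2 * π)) ≤ √m / 2 := by
    rw [show √m / 2 = √(m / 4) by rw [sqrt_div' _ (by norm_num : (0:ℝ) ≤ 4)]; norm_num]
    refine sqrt_le_sqrt ?_
    rw [div_le_div_iff₀ (by positivity) (by norm_num)]
    nlinarith [pi_gt_three]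
  rw [rpow_neg (by linarith), ← sqrt_eq_rpow, ← div_eq_mul_inv, div_le_iff₀ (by positivity)]
  linarith [sphereMarginalConst_le_sqrt hm]

theorem sphereMarginalConst_mul_setIntegral_le_two {m : ℕ} (hm : 3 ≤ m) :
    sphereMarginalConst m * ∫ t in Icc (-1 : ℝ) 1, (1 - t ^ 2) ^ (((m : ℝ) - 3) / 2) ≤ 2 := by
  rcases hm.eq_or_lt with rfl | hm4
  · have hc : sphereMarginalConst ((3 : ℕ) : ℝ) ≤ 1 := by
      refine (sphereMarginalConst_le_sqrt (by norm_num)).trans (sqrt_le_one.2 ?_)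
      rw [div_le_one (by positivity), Nat.cast_ofNat]
      linarith [pi_gt_three]
    have hI : ∫ t in Icc (-1 : ℝ) 1, (1 - t ^ 2) ^ ((((3 : ℕ) : ℝ) - 3) / 2) = 2 := by
      norm_num [setIntegral_const, volume_real_Icc]
    rw [hI]
    linarith
  have hm4 : (4 : ℝ) ≤ m := by exact_mod_cast hm4
  have ha : 0 < ((m : ℝ) - 3) / 2 := by linarith
  calc sphereMarginalConst m * ∫ t in Icc (-1 : ℝ) 1, (1 - t ^ 2) ^ (((m : ℝ) - 3) / 2)
      ≤ √((m - 1) / (2 * π)) * √(π / (((m : ℝ) - 3) / 2)) :=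
        mul_le_mul (sphereMarginalConst_le_sqrt (by linarith)) (setIntegral_one_sub_sq_rpow_le ha)
          (setIntegral_nonneg measurableSet_Icc fun t ht =>
            rpow_nonneg (one_sub_sq_nonneg_of_mem_Icc ht) _) (sqrt_nonneg _)
    _ = √((m - 1) / (m - 3)) := by
        rw [← sqrt_mul (div_nonneg (by linarith) (by positivity))]
        congr 1
        field_simp
    _ ≤ √(2 ^ 2) := sqrt_le_sqrt (by rw [div_le_iff₀ (by linarith)]; linarith)
    _ = 2 := sqrt_sq zero_le_two

theorem one_le_log_rpow {x ν : ℝ} (hx : 3 ≤ x) (hν : 0 ≤ ν) : 1 ≤ log x ^ ν := by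
  refine one_le_rpow ((le_log_iff_exp_le (by linarith)).2 ?_) hν
  linarith [exp_one_lt_d9, show (2.7182818286 : ℝ) ≤ 3 by norm_num]

/-- Log-moment bound for the density of one coordinate of a uniform point on `S^{m-1}`:
with `g(t) = c_m (1-t²)^{(m-3)/2}` and `c_m = Γ(m/2)/(√π Γ((m-1)/2))`, for every
`ν ≥ 1` there is `M_ν` independent of `m ≥ 3` such that
`∫_{-1}^1 |log|t||^ν g(t) dt ≤ M_ν (log m)^ν`. -/
theorem stmt16 (ν : ℝ) (hν : 1 ≤ ν) :
    ∃ M : ℝ, ∀ m : ℕ, 3 ≤ m →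
      (∫ t in Set.Icc (-1 : ℝ) 1,
          abs (Real.log (abs t)) ^ ν *
            (Real.Gamma ((m : ℝ) / 2) / (Real.sqrt π * Real.Gamma (((m : ℝ) - 1) / 2)) *
              (1 - t ^ 2) ^ (((m : ℝ) - 3) / 2)))
        ≤ M * (Real.log m) ^ ν := by
  refine ⟨2 ^ ν * (1 + (2 * ν) ^ ν), fun m hm => ?_⟩
  have hm3 : (3 : ℝ) ≤ m := by exact_mod_cast hm
  have ha : (0 : ℝ) ≤ ((m : ℝ) - 3) / 2 := by linarith
  have hc := sphereMarginalConst_pos (by linarith : (1 : ℝ) < m)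
  have hlog := one_le_log_rpow hm3 (by linarith : 0 ≤ ν)
  have hK : 0 ≤ (2 * ν) ^ ν := rpow_nonneg (by linarith) ν
  have hmass := sphereMarginalConst_mul_setIntegral_le_two hm
  rw [← integral_const_mul] at hmass
  have hcoef := sphereMarginalConst_mul_rpow_neg_half_le (by linarith : (1 : ℝ) < m)
  calc _ ≤ 2 ^ (ν - 1) * (log m ^ ν * (∫ t in Icc (-1 : ℝ) 1,
          sphereMarginalConst m * (1 - t ^ 2) ^ (((m : ℝ) - 3) / 2))
        + 4 * (2 * ν) ^ ν * (m : ℝ) ^ (-(1 / 2 : ℝ)) * sphereMarginalConst m) :=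
      setIntegral_abs_log_rpow_mul_le hν (by linarith : (1 : ℝ) ≤ m)
        ((integrableOn_one_sub_sq_rpow ha).const_mul _)
        (fun t ht => mul_nonneg hc.le (rpow_nonneg (one_sub_sq_nonneg_of_mem_Icc ht) _))
        (fun t ht => mul_le_of_le_one_right hc.le (one_sub_sq_rpow_le_one ha ht))
    _ ≤ 2 ^ (ν - 1) * (log m ^ ν * 2 + 2 * (2 * ν) ^ ν) := by
        gcongr 2 ^ (ν - 1) * (?_ + ?_)
        · exact mul_le_mul_of_nonneg_left hmass (by linarith)
        · nlinarith
    _ ≤ 2 ^ (ν - 1) * 2 * (1 + (2 * ν) ^ ν) * log m ^ ν := by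
        nlinarith [mul_nonneg (mul_nonneg (rpow_pos_of_pos two_pos (ν - 1)).le hK)
          (sub_nonneg.2 hlog)]
    _ = 2 ^ ν * (1 + (2 * ν) ^ ν) * log m ^ ν := by
        rw [rpow_sub_one two_ne_zero]
        ring
end
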